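/- Let G be a finite simple graph, k ≥ 2 an integer, and let (V_1, …, V_k) be a k-partition of G of minimum lexicographic order. Then for all i, j ∈ {1, …, k} and every vertex v ∈ V_i: if |N(v) ∩ V_i| ≥ 1 and e(V_i) > e(V_j) + 1, then |N(v) ∩ V_j| ≥ 2. -/

import Mathlib

open Finset

noncomputable def hfun (x : ℝ) : ℝ := Real.sqrt (2 * x + 1 / 4) - 1 / 2

variable {V : Type*} [Fintype V] [DecidableEq V]

/-- Number of edges of `G` with both endpoints in `S`. -/
def eIn (G : SimpleGraph V) [DecidableRel G.Adj] (S : Finset V) : ℕ :=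
  (Finset.univ.filter (fun p : V × V => G.Adj p.1 p.2 ∧ p.1 ∈ S ∧ p.2 ∈ S)).card / 2

/-- Number of edges of `G` with one endpoint in `S` and the other in `T` (for disjoint `S`, `T`). -/
def eCross (G : SimpleGraph V) [DecidableRel G.Adj] (S T : Finset V) : ℕ :=
  (Finset.univ.filter (fun p : V × V => G.Adj p.1 p.2 ∧ p.1 ∈ S ∧ p.2 ∈ T)).card

/-- `P` is a partition of the vertex set into `k` pairwise disjoint (possibly empty) parts. -/
def IsKPartition {k : ℕ} (P : Fin k → Finset V) : Prop :=
  (∀ i j : Fin k, i ≠ j → Disjoint (P i) (P j)) ∧ ∀ v : V, ∃ i, v ∈ P i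

/-- The number of crossing edges of a `k`-partition. -/
def crossTotal (G : SimpleGraph V) [DecidableRel G.Adj] {k : ℕ} (P : Fin k → Finset V) : ℕ :=
  ∑ i : Fin k, ∑ j : Fin k, if i < j then eCross G (P i) (P j) else 0

/-- `f_k(G)`: the maximum number of crossing edges over all `k`-partitions of `G`. -/
noncomputable def maxCut (G : SimpleGraph V) [DecidableRel G.Adj] (k : ℕ) : ℕ :=
  sSup {n : ℕ | ∃ P : Fin k → Finset V, IsKPartition P ∧ crossTotal G P = n}

/-- The values `e(V₁),…,e(V_k)` of a `k`-partition, listed in nonincreasing order. -/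
def lexVals {V : Type*} [Fintype V] [DecidableEq V] (G : SimpleGraph V) [DecidableRel G.Adj]
    {k : ℕ} (P : Fin k → Finset V) : List ℕ :=
  Multiset.sort ((Finset.univ : Finset (Fin k)).val.map fun i => eIn G (P i)) (· ≥ ·)

/-- `Q` is lexicographically smaller than `P`. -/
def LexSmaller {V : Type*} [Fintype V] [DecidableEq V] (G : SimpleGraph V) [DecidableRel G.Adj]
    {k : ℕ} (Q P : Fin k → Finset V) : Prop :=
  List.Lex (· < ·) (lexVals G Q) (lexVals G P)


/-!
Move `v` from `V_i` to `V_j`. This lowers `e(V_i)` by `|N(v) ∩ V_i| ≥ 1` and raises `e(V_j)` by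
`|N(v) ∩ V_j|`; if the latter were at most `1`, both new values would lie below `e(V_i)`. The
multiset of the values `e(V_l)` would then drop in the Dershowitz–Manna order, and for sorted
lists this means a lexicographically smaller partition.
-/

namespace List

variable {α : Type*} [LinearOrder α]

theorem lex_lt_of_countP_le_of_countP_lt {L' L : List α} (hL' : L'.Pairwise (· ≥ ·))
    (hL : L.Pairwise (· ≥ ·)) (m : α)
    (hle : ∀ t, m < t → L'.countP (t ≤ ·) ≤ L.countP (t ≤ ·))
    (hlt : L'.countP (m ≤ ·) < L.countP (m ≤ ·)) : Lex (· < ·) L' L := by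
  induction L generalizing L' with
  | nil => simp at hlt
  | cons a L ih =>
    cases L' with
    | nil => exact .nil
    | cons a' L' =>
      rcases lt_trichotomy a' a with h | rfl | h
      · exact .rel h
      · refine .cons (ih (pairwise_cons.1 hL').2 (pairwise_cons.1 hL).2 (fun t ht => ?_) ?_)
        · have := hle t ht
          simp only [countP_cons] at this
          omega
        · simp only [countP_cons] at hlt
          omega
      · have hzero : ∀ t, a < t → (a :: L).countP (t ≤ ·) = 0 := by
          refine fun t ht => countP_eq_zero.2 fun x hx => ?_
          rcases mem_cons.1 hx with rfl | hx
          · simpa using ht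
          · simpa using ((pairwise_cons.1 hL).1 x hx).trans_lt ht
        have hpos : 0 < (a' :: L').countP (a' ≤ ·) :=
          countP_pos_iff.2 ⟨a', mem_cons_self, by simp⟩
        rcases lt_or_ge m a' with hm | hm
        · have := hle a' hm
          have := hzero a' h
          omega
        · have := hzero m (h.trans_le hm)
          omega

end List

namespace Multiset

variable {α : Type*} [LinearOrder α]

theorem IsDershowitzMannaLT.lex_sort {s t : Multiset α} (h : IsDershowitzMannaLT s t) :
    List.Lex (· < ·) (s.sort (· ≥ ·)) (t.sort (· ≥ ·)) := by
  obtain ⟨X, Y, Z, hZ, rfl, rfl, hYZ⟩ := h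
  -- Count entries `≥ t`: no entry of `Y` reaches the maximum `M` of `Z`, which `Z` itself does.
  obtain ⟨M, hMZ, hM⟩ := Z.toFinset.exists_max_image id (by simpa [toFinset_nonempty] using hZ)
  simp only [mem_toFinset, id] at hMZ hM
  have hY : ∀ t, M ≤ t → Y.countP (t ≤ ·) = 0 := by
    refine fun t ht => countP_eq_zero.2 fun y hy => ?_
    obtain ⟨z, hz, hyz⟩ := hYZ y hy
    exact not_le.2 (hyz.trans_le ((hM z hz).trans ht))
  have hcount : ∀ (u : Multiset α) (t : α),
      (u.sort (· ≥ ·)).countP (t ≤ ·) = u.countP (t ≤ ·) := by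
    intro u t
    conv_rhs => rw [← u.sort_eq (· ≥ ·)]
    exact (coe_countP _ _).symm
  refine List.lex_lt_of_countP_le_of_countP_lt (pairwise_sort _ _) (pairwise_sort _ _) M
    (fun t ht => ?_) ?_
  · simp only [hcount, countP_add, hY t ht.le]
    omega
  · have : 0 < Z.countP (M ≤ ·) := countP_pos.2 ⟨M, hMZ, by simp⟩
    simp only [hcount, countP_add, hY M le_rfl]
    omega

theorem isDershowitzMannaLT_map_univ_of_lt {ι : Type*} [Fintype ι] [DecidableEq ι]
    {f g : ι → α} {i j : ι} (hij : i ≠ j) (hfg : ∀ l, l ≠ i → l ≠ j → g l = f l)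
    (hi : g i < f i) (hj : g j < f i) :
    IsDershowitzMannaLT (Finset.univ.val.map g) (Finset.univ.val.map f) := by
  set R := (Finset.univ.val.erase i).erase j
  have huniv : (Finset.univ : Finset ι).val = i ::ₘ j ::ₘ R := by
    rw [cons_erase (mem_erase_of_ne hij.symm |>.2 (Finset.mem_univ_val j)),
      cons_erase (Finset.mem_univ_val i)]
  have hR : R.map g = R.map f := by
    refine map_congr rfl fun l hl => ?_
    have hnd : (univ.val.erase i).Nodup := univ.nodup.erase i
    rw [hnd.mem_erase_iff, univ.nodup.mem_erase_iff] at hl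
    exact hfg l hl.2.1 hl.1
  refine ⟨R.map f, {g i, g j}, {f i, f j}, by simp, ?_, ?_, ?_⟩
  · rw [huniv, ← hR]
    simp [← singleton_add, add_comm, add_left_comm]
  · rw [huniv]
    simp [← singleton_add, add_comm, add_left_comm]
  · simp only [insert_eq_cons, mem_cons, mem_singleton]
    rintro y (rfl | rfl)
    exacts [⟨f i, by simp, hi⟩, ⟨f i, by simp, hj⟩]

end Multiset

section Graph

variable (G : SimpleGraph V) [DecidableRel G.Adj]

theorem card_adj_pairs_eq_sum (S : Finset V) :
    #{p : V × V | G.Adj p.1 p.2 ∧ p.1 ∈ S ∧ p.2 ∈ S} =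
      ∑ a ∈ S, #(G.neighborFinset a ∩ S) := by
  rw [card_filter, ← univ_product_univ, sum_product, ← sum_subset (subset_univ S)]
  · refine sum_congr rfl fun a ha => ?_
    rw [← card_filter]
    congr 1
    ext b
    simp [ha]
  · intro a _ ha
    simp [ha]

theorem eIn_insert {S : Finset V} {v : V} (hv : v ∉ S) :
    eIn G (insert v S) = eIn G S + #(G.neighborFinset v ∩ S) := by
  have hv' : G.neighborFinset v ∩ insert v S = G.neighborFinset v ∩ S :=
    inter_insert_of_notMem (by simp)
  have hS : ∀ a ∈ S, #(G.neighborFinset a ∩ insert v S)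
      = #(G.neighborFinset a ∩ S) + if G.Adj a v then 1 else 0 := by
    intro a _
    split_ifs with h
    · rw [inter_insert_of_mem (by simpa using h), card_insert_of_notMem (by simp [hv])]
    · rw [inter_insert_of_notMem (by simpa using h), add_zero]
  have hdeg : ∑ a ∈ S, (if G.Adj a v then 1 else 0) = #(G.neighborFinset v ∩ S) := by
    rw [← card_filter, inter_comm, ← filter_mem_eq_inter]
    simp [SimpleGraph.adj_comm]
  unfold eIn
  rw [card_adj_pairs_eq_sum, card_adj_pairs_eq_sum, sum_insert hv, hv', sum_congr rfl hS,
    sum_add_distrib, hdeg]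
  omega

theorem eIn_erase {S : Finset V} {v : V} (hv : v ∈ S) :
    eIn G S = eIn G (S.erase v) + #(G.neighborFinset v ∩ S) := by
  conv_lhs => rw [← insert_erase hv]
  rw [eIn_insert G (notMem_erase v S), inter_erase,
    (G.neighborFinset v ∩ S).erase_eq_of_notMem (by simp)]

end Graph

section moveVertex

variable {α : Type*} [DecidableEq α] {k : ℕ}

def moveVertex (P : Fin k → Finset α) (v : α) (j : Fin k) : Fin k → Finset α :=
  fun l => if l = j then insert v (P l) else (P l).erase v

variable {P : Fin k → Finset α}

theorem isKPartition_moveVertex (hP : IsKPartition P) (v : α) (j : Fin k) :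
    IsKPartition (moveVertex P v j) := by
  have hsub : ∀ l, moveVertex P v j l ⊆ insert v (P l) := fun l => by
    unfold moveVertex
    split_ifs
    exacts [Subset.rfl, (erase_subset v _).trans (subset_insert v _)]
  have hmem : ∀ l, v ∈ moveVertex P v j l → l = j := fun l hl => by
    by_contra h
    simp [moveVertex, h] at hl
  refine ⟨fun l m hlm => disjoint_left.2 fun x hxl hxm => ?_, fun w => ?_⟩
  · by_cases hx : x = v
    · subst hx
      exact hlm ((hmem l hxl).trans (hmem m hxm).symm)
    · exact disjoint_left.1 (hP.1 l m hlm) ((mem_insert.1 (hsub l hxl)).resolve_left hx)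
        ((mem_insert.1 (hsub m hxm)).resolve_left hx)
  · by_cases hw : w = v
    · exact ⟨j, by simp [moveVertex, hw]⟩
    · obtain ⟨l, hl⟩ := hP.2 w
      exact ⟨l, by unfold moveVertex; split_ifs <;> simp [hl, hw]⟩

theorem moveVertex_eq_of_ne (hP : IsKPartition P) {v : α} {i j l : Fin k} (hv : v ∈ P i)
    (hli : l ≠ i) (hlj : l ≠ j) : moveVertex P v j l = P l := by
  rw [moveVertex, if_neg hlj, erase_eq_of_notMem]
  exact disjoint_left.1 (hP.1 i l (Ne.symm hli)) hv

end moveVertex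

theorem stmt_12_general {V : Type*} [Fintype V] [DecidableEq V]
    (G : SimpleGraph V) [DecidableRel G.Adj] (k : ℕ)
    (P : Fin k → Finset V) (hP : IsKPartition P)
    (hmin : ∀ Q : Fin k → Finset V, IsKPartition Q → ¬ LexSmaller G Q P)
    (i j : Fin k) (v : V) (hv : v ∈ P i)
    (hd : 1 ≤ (G.neighborFinset v ∩ P i).card) (he : eIn G (P j) + 1 < eIn G (P i)) :
    2 ≤ (G.neighborFinset v ∩ P j).card := by
  by_contra! hfew
  have hij : i ≠ j := by
    rintro rfl
    omega
  have hvj : v ∉ P j := disjoint_left.1 (hP.1 i j hij) hv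
  have hsource : eIn G (P i) = eIn G (moveVertex P v j i) + #(G.neighborFinset v ∩ P i) := by
    rw [moveVertex, if_neg hij, ← eIn_erase G hv]
  have htarget : eIn G (moveVertex P v j j) = eIn G (P j) + #(G.neighborFinset v ∩ P j) := by
    rw [moveVertex, if_pos rfl, eIn_insert G hvj]
  exact hmin _ (isKPartition_moveVertex hP v j)
    (Multiset.isDershowitzMannaLT_map_univ_of_lt hij
      (fun l hli hlj => by rw [moveVertex_eq_of_ne hP hv hli hlj]) (by omega) (by omega)).lex_sort

/-- Lemma on `k`-partitions of minimum lexicographic order. -/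
theorem stmt_12 {V : Type*} [Fintype V] [DecidableEq V]
    (G : SimpleGraph V) [DecidableRel G.Adj] (k : ℕ) (hk : 2 ≤ k)
    (P : Fin k → Finset V) (hP : IsKPartition P)
    (hmin : ∀ Q : Fin k → Finset V, IsKPartition Q → ¬ LexSmaller G Q P)
    (i j : Fin k) (v : V) (hv : v ∈ P i)
    (hd : 1 ≤ (G.neighborFinset v ∩ P i).card) (he : eIn G (P j) + 1 < eIn G (P i)) :
    2 ≤ (G.neighborFinset v ∩ P j).card :=
  stmt_12_general G k P hP hmin i j v hv hd he
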